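/- arXiv:2003.00337 — 2 statements merged into one kernel-verified Lean document; each statement's English description precedes it below -/
import Mathlib

section
/- Let f be a smooth function on a complete Riemannian manifold X with a unique critical point x̄, such that for every ε > 0 there exists A > 0 with ‖∇f(x)‖ ≥ A whenever d(x, x̄) ≥ ε. Let x_t be a negative gradient flow line defined for all t ≥ 0 with f bounded below along the flow. Then for every ε > 0 with associated constant A, f(x_0) − inf_t f(x_t) ≥ A·(d(x_0, x̄) − ε). -/
open Set
open InnerProductSpace

lemma antitone_aux {g g' : ℝ → ℝ} {T : ℝ} (hT : 0 ≤ T)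
    (hderiv : ∀ t ∈ Icc (0:ℝ) T, HasDerivAt g (g' t) t)
    (hle : ∀ t ∈ Icc (0:ℝ) T, g' t ≤ 0) : g T ≤ g 0 := by
  have h := antitoneOn_of_deriv_nonpos (convex_Icc (0:ℝ) T)
    (fun t ht => (hderiv t ht).continuousAt.continuousWithinAt)
    (fun t ht => ((hderiv t (interior_subset ht)).differentiableAt).differentiableWithinAt)
    (fun t ht => by rw [(hderiv t (interior_subset ht)).deriv]; exact hle t (interior_subset ht))
  exact h (left_mem_Icc.2 hT) (right_mem_Icc.2 hT) hT

/-- Along a negative gradient flow line of a smooth function with a unique critical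
point `xbar`, if `‖∇f‖ ≥ A` outside the `ε`-ball around `xbar` and `f` is bounded below
along the flow, then `f(x₀) - inf_t f(x_t) ≥ A·(d(x₀, xbar) - ε)`. -/
theorem gradient_flow_lower_bound {E : Type*} [NormedAddCommGroup E]
    [InnerProductSpace ℝ E] [CompleteSpace E]
    (f : E → ℝ) (hf : ContDiff ℝ (⊤ : ℕ∞) f)
    (xbar : E) (hcrit : gradient f xbar = 0)
    (huniq : ∀ y : E, gradient f y = 0 → y = xbar)
    (x : ℝ → E) (hflow : ∀ t : ℝ, 0 ≤ t → HasDerivAt x (-(gradient f (x t))) t)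
    (hbdd : BddBelow ((fun t => f (x t)) '' Ici (0 : ℝ)))
    (ε A : ℝ) (hε : 0 < ε) (hA : 0 < A)
    (hAprop : ∀ y : E, ε ≤ dist y xbar → A ≤ ‖gradient f y‖) :
    A * (dist (x 0) xbar - ε) ≤ f (x 0) - sInf ((fun t => f (x t)) '' Ici (0 : ℝ)) := by
  have hmem0 : f (x 0) ∈ (fun t => f (x t)) '' Ici (0 : ℝ) :=
    ⟨0, self_mem_Ici, rfl⟩
  have hInf_le : ∀ t : ℝ, 0 ≤ t →
      sInf ((fun t => f (x t)) '' Ici (0 : ℝ)) ≤ f (x t) :=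
    fun t ht => csInf_le hbdd ⟨t, ht, rfl⟩
  -- derivative of f along the flow
  have hdiff : ∀ y, DifferentiableAt ℝ f y :=
    fun y => (hf.differentiable (by simp)).differentiableAt
  have hfx : ∀ t : ℝ, 0 ≤ t →
      HasDerivAt (fun s => f (x s)) (-‖gradient f (x t)‖^2) t := by
    intro t ht
    have h1 := ((hdiff (x t)).hasGradientAt.hasFDerivAt).comp_hasDerivAt t (hflow t ht)
    simp [-toDual_gradient, toDual_apply_apply, real_inner_self_eq_norm_sq] at h1
    exact h1
  rcases le_or_gt (dist (x 0) xbar) ε with hd | hd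
  · have : A * (dist (x 0) xbar - ε) ≤ 0 :=
      mul_nonpos_of_nonneg_of_nonpos hA.le (by linarith)
    have := hInf_le 0 le_rfl
    linarith
  -- main case : the set of entry times is nonempty
  set S : Set ℝ := {t : ℝ | 0 ≤ t ∧ dist (x t) xbar ≤ ε} with hS
  have hSne : S.Nonempty := by
    by_contra hne
    have hout : ∀ t : ℝ, 0 ≤ t → ε ≤ dist (x t) xbar := by
      intro t ht
      by_contra hcon
      push_neg at hcon
      exact hne ⟨t, ht, hcon.le⟩
    obtain ⟨c, hc⟩ := hbdd
    have hclow : ∀ t : ℝ, 0 ≤ t → c ≤ f (x t) :=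
      fun t ht => hc ⟨t, ht, rfl⟩
    have h1 : c ≤ f (x 0) := hclow 0 le_rfl
    set T : ℝ := (f (x 0) - c) / A ^ 2 + 1 with hT
    have hT0 : 0 ≤ T := by
      have h2 : (0:ℝ) ≤ (f (x 0) - c) / A ^ 2 :=
        div_nonneg (by linarith) (by positivity)
      simp only [hT]; linarith
    have key : f (x T) + A ^ 2 * T ≤ f (x 0) + A ^ 2 * 0 := by
      refine antitone_aux (g := fun t => f (x t) + A ^ 2 * t)
        (g' := fun t => -‖gradient f (x t)‖ ^ 2 + A ^ 2) hT0 ?_ ?_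
      · intro t ht
        have h := (hfx t ht.1).add ((hasDerivAt_id t).const_mul (A^2))
        simp at h
        exact h
      · intro t ht
        have := hAprop (x t) (hout t ht.1)
        show -‖gradient f (x t)‖ ^ 2 + A ^ 2 ≤ 0
        nlinarith [norm_nonneg (gradient f (x t))]
    have := hclow T hT0
    have hA2 : 0 < A ^ 2 := by positivity
    have : A ^ 2 * T ≤ f (x 0) - c := by linarith
    rw [hT] at this
    have h2 : A ^ 2 * ((f (x 0) - c) / A ^ 2) = f (x 0) - c := by
      field_simp
    nlinarith
  -- T = first entry time
  have hSbdd : BddBelow S := ⟨0, fun t ht => ht.1⟩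
  set T : ℝ := sInf S with hTdef
  have hT0 : 0 ≤ T := le_csInf hSne (fun t ht => ht.1)
  have hTcl : T ∈ closure S := csInf_mem_closure hSne hSbdd
  have hdcont : ContinuousAt (fun t => dist (x t) xbar) T :=
    ((hflow T hT0).continuousAt.dist continuousAt_const)
  have hdistT : dist (x T) xbar ≤ ε := by
    haveI : (nhdsWithin T S).NeBot := mem_closure_iff_nhdsWithin_neBot.1 hTcl
    refine le_of_tendsto ((hdcont.continuousWithinAt (s := S)).tendsto) ?_
    filter_upwards [self_mem_nhdsWithin] with t ht
    exact ht.2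
  have hlow0 : ∀ t ∈ Ico (0:ℝ) T, ε ≤ dist (x t) xbar := by
    intro t ht
    by_contra hcon
    push_neg at hcon
    exact absurd (csInf_le hSbdd ⟨ht.1, hcon.le⟩) (not_le.2 ht.2)
  have hlow : ∀ t ∈ Icc (0:ℝ) T, ε ≤ dist (x t) xbar := by
    intro t ht
    rcases eq_or_lt_of_le ht.2 with heq | hlt
    · rw [heq]
      rcases eq_or_lt_of_le hT0 with h0 | h0
      · rw [← h0]; exact hd.le
      · have hcl : T ∈ closure (Ico (0:ℝ) T) := by
          rw [closure_Ico (ne_of_lt h0)]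
          exact ⟨hT0, le_rfl⟩
        haveI : (nhdsWithin T (Ico (0:ℝ) T)).NeBot :=
          mem_closure_iff_nhdsWithin_neBot.1 hcl
        refine ge_of_tendsto ((hdcont.continuousWithinAt (s := Ico (0:ℝ) T)).tendsto) ?_
        filter_upwards [self_mem_nhdsWithin] with s hs
        exact hlow0 s hs
    · exact hlow0 t ⟨ht.1, hlt⟩
  -- the flow travels distance at least dist(x 0, xbar) - ε
  set u : E := x T - x 0 with hu
  by_cases hu0 : u = 0
  · have : x T = x 0 := by
      have := sub_eq_zero.1 hu0
      exact this
    rw [← this] at hd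
    linarith [hd.trans_le hdistT]
  · set v : E := ‖u‖⁻¹ • u with hv
    have hunorm : (0:ℝ) < ‖u‖ := norm_pos_iff.2 hu0
    have key : f (x T) + A * inner ℝ v (x T) ≤ f (x 0) + A * inner ℝ v (x 0) := by
      refine antitone_aux (g := fun t => f (x t) + A * inner ℝ v (x t))
        (g' := fun t => -‖gradient f (x t)‖ ^ 2 + A * inner ℝ v (-(gradient f (x t)))) hT0 ?_ ?_
      · intro t ht
        have h2 := ((innerSL ℝ v).hasFDerivAt.comp_hasDerivAt t (hflow t ht.1)).const_mul A
        have h := (hfx t ht.1).add h2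
        simp at h ⊢
        exact h
      · intro t ht
        have hAg := hAprop (x t) (hlow t ht)
        have hcs : inner ℝ v (-(gradient f (x t))) ≤ ‖gradient f (x t)‖ := by
          have h1 := real_inner_le_norm v (-(gradient f (x t)))
          have hvn : ‖v‖ = 1 := by
            rw [hv, norm_smul, norm_inv, norm_norm, inv_mul_cancel₀ (ne_of_gt hunorm)]
          rw [hvn, one_mul, norm_neg] at h1
          exact h1
        show -‖gradient f (x t)‖ ^ 2 + A * inner ℝ v (-(gradient f (x t))) ≤ 0
        nlinarith [norm_nonneg (gradient f (x t))]
    have hinner : (inner ℝ v (x T) : ℝ) - inner ℝ v (x 0) = ‖u‖ := by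
      rw [← inner_sub_right, ← hu, hv, real_inner_smul_left, real_inner_self_eq_norm_sq]
      field_simp
    have hstep : A * ‖u‖ ≤ f (x 0) - f (x T) := by nlinarith
    have hdist : dist (x 0) xbar - ε ≤ ‖u‖ := by
      have htri := dist_triangle (x 0) (x T) xbar
      have : dist (x 0) (x T) = ‖u‖ := by
        rw [dist_eq_norm, hu, ← norm_neg]
        congr 1
        abel
      linarith
    have hInfT := hInf_le T hT0
    nlinarith
end

section
/- Let (x_i) be a finite sequence of points in a metric space such that among any N+1 consecutive points there are two at distance ≥ δ, and let f be a function with f(x_{i+1}) < f(x_i) for all i, f ≥ 0, and f(x_j) − f(x_ℓ) ≥ v > 0 whenever j < ℓ and d(x_j, x_ℓ) ≥ δ. Then the length of the sequence satisfies i ≤ N·(f(x_0)/v + 1) for any valid index i. -/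
/-!
Cut the indices `0, …, i` into blocks of length `N`. Every block contains a `δ`-separated
pair, and since `f` decreases along the sequence, `f` drops by at least `v` across each
block. After `⌊i / N⌋` blocks the total drop is at most `f(x₀)`, because `f ≥ 0`.
-/

lemma mul_le_sub_of_forall_block_drop {u : ℕ → ℝ} {N i : ℕ} {v : ℝ}
    (hblock : ∀ j, j + N ≤ i → v ≤ u j - u (j + N)) (k : ℕ) (hk : k * N ≤ i) :
    k * v ≤ u 0 - u (k * N) := by
  induction k with
  | zero => simp
  | succ k ih =>
    have hk' : k * N + N ≤ i := by rwa [← Nat.succ_mul]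
    have hdrop := hblock (k * N) hk'
    have hprev := ih (by omega)
    rw [Nat.succ_mul]
    push_cast
    linarith

lemma le_mul_div_add_one_of_forall_block_drop {u : ℕ → ℝ} {N i : ℕ} {v : ℝ}
    (hN : 0 < N) (hv : 0 < v) (hnonneg : ∀ j ≤ i, 0 ≤ u j)
    (hblock : ∀ j, j + N ≤ i → v ≤ u j - u (j + N)) :
    (i : ℝ) ≤ N * (u 0 / v + 1) := by
  set k := i / N
  have hkN : k * N ≤ i := Nat.div_mul_le_self i N
  have hk : (k : ℝ) ≤ u 0 / v := by
    rw [le_div_iff₀ hv]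
    linarith [mul_le_sub_of_forall_block_drop hblock k hkN, hnonneg (k * N) hkN]
  have hi : (i : ℝ) < (k + 1) * N := by
    exact_mod_cast (Nat.lt_div_mul_add hN).trans_eq (by ring)
  calc (i : ℝ) ≤ (k + 1) * N := hi.le
    _ ≤ (u 0 / v + 1) * N := by gcongr
    _ = N * (u 0 / v + 1) := mul_comm _ _

theorem surgered_flow_termination_general {X : Type*} [MetricSpace X]
    (x : ℕ → X) (f : X → ℝ) (N : ℕ) (δ v : ℝ)
    (hv : 0 < v) (i : ℕ)
    (hdec : ∀ j < i, f (x (j + 1)) < f (x j))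
    (hnonneg : ∀ j ≤ i, 0 ≤ f (x j))
    (hconsec : ∀ j : ℕ, j + N ≤ i →
      ∃ a b : ℕ, j ≤ a ∧ a < b ∧ b ≤ j + N ∧ δ ≤ dist (x a) (x b))
    (hdrop : ∀ j ℓ : ℕ, j < ℓ → ℓ ≤ i → δ ≤ dist (x j) (x ℓ) →
      v ≤ f (x j) - f (x ℓ)) :
    (i : ℝ) ≤ N * (f (x 0) / v + 1) := by
  have hN : 0 < N := Nat.pos_of_ne_zero fun hN0 => by
    obtain ⟨a, b, -, hab, hb, -⟩ := hconsec 0 (by omega)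
    omega
  have hanti : AntitoneOn (f ∘ x) (Set.Iic i) := (strictAntiOn_Iic_of_succ_lt hdec).antitoneOn
  refine le_mul_div_add_one_of_forall_block_drop (u := f ∘ x) hN hv hnonneg fun j hj => ?_
  obtain ⟨a, b, hja, hab, hbj, hsep⟩ := hconsec j hj
  have hbi : b ≤ i := hbj.trans hj
  calc v ≤ f (x a) - f (x b) := hdrop a b hab hbi hsep
    _ ≤ f (x j) - f (x (j + N)) :=
      sub_le_sub (hanti (show j ≤ i by omega) (show a ≤ i by omega) hja)
        (hanti hbi (show j + N ≤ i from hj) hbj)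

/-- Abstract termination bound for the surgered flow: if along a sequence
`x₀, x₁, …` the function `f ≥ 0` strictly decreases, among any `N+1` consecutive
points two are `δ`-separated, and `f` drops by at least `v > 0` across any
`δ`-separated pair, then any valid index `i` satisfies `i ≤ N·(f(x₀)/v + 1)`. -/
theorem surgered_flow_termination {X : Type*} [MetricSpace X]
    (x : ℕ → X) (f : X → ℝ) (N : ℕ) (hN : 0 < N) (δ v : ℝ) (hδ : 0 < δ)
    (hv : 0 < v) (i : ℕ)
    (hdec : ∀ j < i, f (x (j + 1)) < f (x j))
    (hnonneg : ∀ j ≤ i, 0 ≤ f (x j))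
    (hconsec : ∀ j : ℕ, j + N ≤ i →
      ∃ a b : ℕ, j ≤ a ∧ a < b ∧ b ≤ j + N ∧ δ ≤ dist (x a) (x b))
    (hdrop : ∀ j ℓ : ℕ, j < ℓ → ℓ ≤ i → δ ≤ dist (x j) (x ℓ) →
      v ≤ f (x j) - f (x ℓ)) :
    (i : ℝ) ≤ N * (f (x 0) / v + 1) :=
  surgered_flow_termination_general x f N δ v hv i hdec hnonneg hconsec hdrop
end
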